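/- (TwINEst oracle complexity) Let A ∈ R^{d×n}, let B = AA^⊤, let M = max_i B_{ii}, and suppose not all diagonal entries of B are equal, with gap Δ = M − max{B_{jj} : B_{jj} < M} > 0. Let D^m(B) be the Hutchinson diagonal estimator of B from m i.i.d. Rademacher vectors, let j* = argmax_i D^m_i(B), and let T^m(A) = ||A^⊤ e_{j*}||_2. If m > (8 log(2d/δ)/Δ²) · ||B − diag(B)||_{2→∞}², then with probability at least 1 − δ, T^m(A) = ||A||_{2→∞}. -/

import Mathlib

open scoped BigOperators ENNReal
open MeasureTheory ProbabilityTheory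

noncomputable def rademacherLaw : Measure ℝ :=
  (2 : ℝ≥0∞)⁻¹ • Measure.dirac (1 : ℝ) + (2 : ℝ≥0∞)⁻¹ • Measure.dirac (-1 : ℝ)

/-!
On sign vectors the Hutchinson estimate is `Dᵐᵢ(B) = Bᵢᵢ + (1/m) ∑ₖ xᵏᵢ ∑_{j ≠ i} Bᵢⱼ xᵏⱼ`.
For one Rademacher vector `x`, the error term `xᵢ ∑_{j ≠ i} Bᵢⱼ xⱼ` has moment generating
function exactly `∏_{j ≠ i} cosh (t Bᵢⱼ)` (split according to the sign of `xᵢ`), so it is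
sub-Gaussian with variance proxy `∑_{j ≠ i} Bᵢⱼ² ≤ ‖B - diag B‖²_{2→∞}`. The `m` samples are
independent, so Hoeffding's bound and a union bound over the `d` rows make every error smaller
than `Δ / 2` with probability at least `1 - δ`. On that event the argmax of `Dᵐ` is a row whose
diagonal entry exceeds `max Bᵢᵢ - Δ`, hence equals the maximum by the definition of the gap.
-/

open Finset Real
open scoped NNReal

instance : IsProbabilityMeasure rademacherLaw :=
  ⟨by simp [rademacherLaw, ENNReal.inv_two_add_inv_two]⟩

lemma ae_rademacherLaw : ∀ᵐ y ∂rademacherLaw, y = 1 ∨ y = -1 := by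
  simp [rademacherLaw]

lemma integrable_rademacherLaw (f : ℝ → ℝ) : Integrable f rademacherLaw :=
  ((integrable_dirac (by simp)).smul_measure (by simp)).add_measure
    ((integrable_dirac (by simp)).smul_measure (by simp))

lemma integral_rademacherLaw (f : ℝ → ℝ) :
    ∫ y, f y ∂rademacherLaw = (f 1 + f (-1)) / 2 := by
  rw [rademacherLaw, integral_add_measure ((integrable_dirac (by simp)).smul_measure (by simp))
    ((integrable_dirac (by simp)).smul_measure (by simp))]
  simp only [integral_smul_measure, ENNReal.toReal_inv, ENNReal.toReal_ofNat, integral_dirac,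
    smul_eq_mul]
  ring

lemma map_eq_pi_pi_of_iIndepFun {Ω κ ι β : Type*} [MeasurableSpace Ω] [MeasurableSpace β]
    {μ : Measure Ω} [IsProbabilityMeasure μ] [Fintype κ] [Fintype ι] {X : Ω → κ → ι → β}
    (hmeas : ∀ k i, Measurable fun ω => X ω k i)
    (hindep : iIndepFun (fun (p : κ × ι) ω => X ω p.1 p.2) μ) {ν : Measure β}
    [IsProbabilityMeasure ν] (hlaw : ∀ k i, μ.map (fun ω => X ω k i) = ν) :
    μ.map X = Measure.pi fun _ : κ => Measure.pi fun _ : ι => ν := by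
  have hflat : μ.map (fun ω p => X ω p.1 p.2) = Measure.pi fun _ : κ × ι => ν := by
    rw [(iIndepFun_iff_map_fun_eq_pi_map fun p : κ × ι => (hmeas p.1 p.2).aemeasurable).1
      hindep]
    exact congrArg Measure.pi (funext fun p => hlaw p.1 p.2)
  have hX : X = MeasurableEquiv.curry κ ι β ∘ fun ω (p : κ × ι) => X ω p.1 p.2 := rfl
  rw [hX, ← Measure.map_map (MeasurableEquiv.measurable _)
      (measurable_pi_lambda _ fun p : κ × ι => hmeas p.1 p.2), hflat,
    ← Measure.infinitePi_eq_pi, Measure.infinitePi_map_curry (fun _ _ => ν)]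
  simp only [Measure.infinitePi_eq_pi]

lemma ProbabilityTheory.HasSubgaussianMGF.measureReal_abs_ge_le {Ω : Type*}
    [MeasurableSpace Ω] {μ : Measure Ω} [IsFiniteMeasure μ] {X : Ω → ℝ} {c : ℝ≥0}
    (h : HasSubgaussianMGF X c μ) {ε : ℝ} (hε : 0 ≤ ε) :
    μ.real {ω | ε ≤ |X ω|} ≤ 2 * exp (-ε ^ 2 / (2 * c)) := by
  have hsplit : {ω | ε ≤ |X ω|} = {ω | ε ≤ X ω} ∪ {ω | ε ≤ (-X) ω} := by
    ext ω
    simp [le_abs]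
  rw [hsplit, two_mul]
  exact (measureReal_union_le _ _).trans
    (add_le_add (h.measure_ge_le hε) (h.neg.measure_ge_le hε))

lemma eq_of_abs_sub_lt_half_gap {ι : Type*} {D b : ι → ℝ} {M Δ : ℝ} (hb : ∀ i, b i ≤ M)
    (hgap : ∀ i, b i < M → b i ≤ M - Δ) {i₀ j : ι} (hi₀ : b i₀ = M)
    (hD : ∀ i, |D i - b i| < Δ / 2) (hj : D i₀ ≤ D j) : b j = M := by
  have h₀ := (abs_lt.1 (hD i₀)).1
  have hj' := (abs_lt.1 (hD j)).2
  by_contra hne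
  linarith [hgap j ((hb j).lt_of_ne hne)]

lemma le_sub_of_lt_of_eq_sub_sSup {ι : Type*} [Finite ι] {b : ι → ℝ} {M Δ : ℝ}
    (hΔ : Δ = M - sSup {x : ℝ | ∃ j, b j = x ∧ x < M}) {i : ι} (hi : b i < M) :
    b i ≤ M - Δ := by
  have hbdd : BddAbove {x : ℝ | ∃ j, b j = x ∧ x < M} :=
    ((Set.finite_range b).subset <| by
      rintro _ ⟨j, rfl, -⟩
      exact Set.mem_range_self j).bddAbove
  linarith [le_csSup hbdd ⟨i, rfl, hi⟩]

section OffDiag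

variable {ι : Type*} [Fintype ι] [DecidableEq ι]

/-- For a sign vector `x` and `c = B i`, this is the error `xᵢ (B x)ᵢ - Bᵢᵢ` of one
Hutchinson sample. -/
def offDiagTerm (c : ι → ℝ) (i : ι) (r : ι → ℝ) : ℝ := r i * ∑ j ∈ univ.erase i, c j * r j

/-- For `s = ±1` and a sign vector `r`, the factor `(1 + s * r i) / 2` is the indicator of
`r i = s`, on which `exp (t * offDiagTerm c i r) = ∏ j, offDiagFactor c i t s j (r j)`. -/
noncomputable def offDiagFactor (c : ι → ℝ) (i : ι) (t s : ℝ) (j : ι) (y : ℝ) : ℝ :=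
  if j = i then (1 + s * y) / 2 else exp (t * (s * (c j * y)))

lemma continuous_offDiagTerm (c : ι → ℝ) (i : ι) : Continuous (offDiagTerm c i) := by
  unfold offDiagTerm
  fun_prop

lemma prod_offDiagFactor (c : ι → ℝ) (i : ι) (t s : ℝ) (r : ι → ℝ) :
    ∏ j, offDiagFactor c i t s j (r j)
      = (1 + s * r i) / 2 * exp (t * (s * ∑ j ∈ univ.erase i, c j * r j)) := by
  rw [← mul_prod_erase univ _ (mem_univ i), offDiagFactor, if_pos rfl, mul_sum, mul_sum,
    exp_sum]
  exact congrArg _ (prod_congr rfl fun j hj => if_neg (ne_of_mem_erase hj))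

lemma integral_prod_offDiagFactor (c : ι → ℝ) (i : ι) (t : ℝ) {s : ℝ} (hs : s = 1 ∨ s = -1) :
    ∫ r, ∏ j, offDiagFactor c i t s j (r j) ∂Measure.pi (fun _ : ι => rademacherLaw)
      = (∏ j ∈ univ.erase i, cosh (t * c j)) / 2 := by
  rw [integral_fintype_prod_eq_prod, ← mul_prod_erase univ _ (mem_univ i), div_eq_inv_mul]
  congr 1
  · simp only [offDiagFactor, if_pos, integral_rademacherLaw, mul_one, mul_neg]
    ring
  · refine prod_congr rfl fun j hj => ?_
    simp only [offDiagFactor, integral_rademacherLaw, if_neg (ne_of_mem_erase hj), cosh_eq]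
    rcases hs with rfl | rfl <;> ring_nf

lemma integrable_prod_offDiagFactor (c : ι → ℝ) (i : ι) (t s : ℝ) :
    Integrable (fun r => ∏ j, offDiagFactor c i t s j (r j))
      (Measure.pi fun _ : ι => rademacherLaw) :=
  Integrable.fintype_prod fun _ => integrable_rademacherLaw _

lemma exp_mul_offDiagTerm_ae_eq (c : ι → ℝ) (i : ι) (t : ℝ) :
    (fun r => exp (t * offDiagTerm c i r)) =ᵐ[Measure.pi (fun _ : ι => rademacherLaw)]
      fun r => ∏ j, offDiagFactor c i t 1 j (r j) + ∏ j, offDiagFactor c i t (-1) j (r j) := by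
  filter_upwards [(Measure.quasiMeasurePreserving_eval _ i).ae ae_rademacherLaw] with r hr
  rw [prod_offDiagFactor, prod_offDiagFactor, offDiagTerm]
  rcases hr with h | h <;> simp only [Function.eval] at h <;> simp [h]

lemma integrable_exp_mul_offDiagTerm (c : ι → ℝ) (i : ι) (t : ℝ) :
    Integrable (fun r => exp (t * offDiagTerm c i r))
      (Measure.pi fun _ : ι => rademacherLaw) :=
  ((integrable_prod_offDiagFactor c i t 1).add
    (integrable_prod_offDiagFactor c i t (-1))).congr (exp_mul_offDiagTerm_ae_eq c i t).symm

lemma mgf_offDiagTerm (c : ι → ℝ) (i : ι) (t : ℝ) :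
    mgf (offDiagTerm c i) (Measure.pi fun _ : ι => rademacherLaw) t
      = ∏ j ∈ univ.erase i, cosh (t * c j) := by
  rw [mgf, integral_congr_ae (exp_mul_offDiagTerm_ae_eq c i t),
    integral_add (integrable_prod_offDiagFactor c i t 1)
      (integrable_prod_offDiagFactor c i t (-1)),
    integral_prod_offDiagFactor c i t (.inl rfl), integral_prod_offDiagFactor c i t (.inr rfl),
    add_halves]

lemma hasSubgaussianMGF_offDiagTerm (c : ι → ℝ) (i : ι) {v : ℝ≥0}
    (hv : ∑ j ∈ univ.erase i, c j ^ 2 ≤ v) :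
    HasSubgaussianMGF (offDiagTerm c i) v (Measure.pi fun _ : ι => rademacherLaw) where
  integrable_exp_mul := integrable_exp_mul_offDiagTerm c i
  mgf_le t := calc
    mgf (offDiagTerm c i) (Measure.pi fun _ : ι => rademacherLaw) t
      = ∏ j ∈ univ.erase i, cosh (t * c j) := mgf_offDiagTerm c i t
    _ ≤ ∏ j ∈ univ.erase i, exp ((t * c j) ^ 2 / 2) :=
      prod_le_prod (fun _ _ => (cosh_pos _).le) fun _ _ => cosh_le_exp_half_sq _
    _ = exp ((∑ j ∈ univ.erase i, c j ^ 2) * t ^ 2 / 2) := by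
      rw [← exp_sum, sum_mul, sum_div]
      exact congrArg exp (sum_congr rfl fun _ _ => by ring)
    _ ≤ exp (v * t ^ 2 / 2) := by gcongr

end OffDiag

section Concentration

variable {ι κ : Type*} [Fintype ι] [DecidableEq ι] [Fintype κ]

lemma hasSubgaussianMGF_sum_offDiagTerm (c : ι → ℝ) (i : ι) {v : ℝ≥0}
    (hv : ∑ j ∈ univ.erase i, c j ^ 2 ≤ v) :
    HasSubgaussianMGF (fun x : κ → ι → ℝ => ∑ k, offDiagTerm c i (x k)) (Fintype.card κ * v)
      (Measure.pi fun _ : κ => Measure.pi fun _ : ι => rademacherLaw) := by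
  set P := fun _ : κ => Measure.pi fun _ : ι => rademacherLaw
  have hrow := hasSubgaussianMGF_offDiagTerm c i hv
  have hsum := HasSubgaussianMGF.sum_of_iIndepFun (s := univ) (c := fun _ : κ => v)
    (iIndepFun_pi (μ := P) (X := fun _ => offDiagTerm c i) fun _ => hrow.aemeasurable)
    fun k _ => .of_map (measurable_pi_apply k).aemeasurable
      (by rwa [(measurePreserving_eval P k).map_eq])
  simpa [nsmul_eq_mul] using hsum

lemma measurableSet_forall_abs_sum_offDiagTerm_lt (B : Matrix ι ι ℝ) (ε : ℝ) :
    MeasurableSet {x : κ → ι → ℝ | ∀ i, |∑ k, offDiagTerm (B i) i (x k)| < ε} := by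
  simp only [Set.ofPred_forall]
  exact .iInter fun i => measurableSet_lt
    (Finset.measurable_sum _ fun k _ =>
      (continuous_offDiagTerm _ i).measurable.comp (measurable_pi_apply k)).abs measurable_const

lemma one_sub_le_measureReal_forall_abs_sum_offDiagTerm_lt (B : Matrix ι ι ℝ) {v : ℝ≥0}
    (hv : ∀ i, ∑ j ∈ univ.erase i, B i j ^ 2 ≤ v) {ε : ℝ} (hε : 0 ≤ ε) :
    1 - Fintype.card ι * (2 * exp (-ε ^ 2 / (2 * (Fintype.card κ * v))))
      ≤ (Measure.pi fun _ : κ => Measure.pi fun _ : ι => rademacherLaw).real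
          {x | ∀ i, |∑ k, offDiagTerm (B i) i (x k)| < ε} := by
  have hcompl : {x : κ → ι → ℝ | ∀ i, |∑ k, offDiagTerm (B i) i (x k)| < ε}
      = (⋃ i, {x | ε ≤ |∑ k, offDiagTerm (B i) i (x k)|})ᶜ := by
    ext x
    simp
  rw [hcompl, probReal_compl_eq_one_sub (by
    rw [← compl_compl (⋃ i, _), ← hcompl]
    exact (measurableSet_forall_abs_sum_offDiagTerm_lt B ε).compl)]
  gcongr
  calc _ ≤ ∑ i, (Measure.pi fun _ : κ => Measure.pi fun _ : ι => rademacherLaw).real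
        {x | ε ≤ |∑ k, offDiagTerm (B i) i (x k)|} := measureReal_iUnion_fintype_le _
    _ ≤ ∑ _i : ι, 2 * exp (-ε ^ 2 / (2 * (Fintype.card κ * v))) := by
      gcongr with i
      exact_mod_cast
        (hasSubgaussianMGF_sum_offDiagTerm (κ := κ) (B i) i (hv i)).measureReal_abs_ge_le hε
    _ = _ := by simp

lemma one_sub_le_measure_forall_abs_sum_offDiagTerm_lt {Ω : Type*} [MeasurableSpace Ω]
    {μ : Measure Ω} [IsProbabilityMeasure μ] {X : Ω → κ → ι → ℝ}
    (hmeas : ∀ k i, Measurable fun ω => X ω k i)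
    (hindep : iIndepFun (fun (p : κ × ι) ω => X ω p.1 p.2) μ)
    (hlaw : ∀ k i, μ.map (fun ω => X ω k i) = rademacherLaw) (B : Matrix ι ι ℝ) {v : ℝ≥0}
    (hv : ∀ i, ∑ j ∈ univ.erase i, B i j ^ 2 ≤ v) {ε : ℝ} (hε : 0 ≤ ε) :
    ENNReal.ofReal (1 - Fintype.card ι * (2 * exp (-ε ^ 2 / (2 * (Fintype.card κ * v)))))
      ≤ μ {ω | ∀ i, |∑ k, offDiagTerm (B i) i (X ω k)| < ε} := by
  have hX : Measurable X := measurable_pi_lambda _ fun k => measurable_pi_lambda _ (hmeas k)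
  rw [← Set.preimage_ofPred_eq
      (p := fun x : κ → ι → ℝ => ∀ i, |∑ k, offDiagTerm (B i) i (x k)| < ε),
    ← Measure.map_apply hX (measurableSet_forall_abs_sum_offDiagTerm_lt B ε),
    map_eq_pi_pi_of_iIndepFun hmeas hindep hlaw]
  exact ENNReal.ofReal_le_of_le_toReal
    (one_sub_le_measureReal_forall_abs_sum_offDiagTerm_lt B hv hε)

end Concentration

section Hutchinson

variable {ι : Type*} [Fintype ι] [DecidableEq ι] {m : ℕ}

noncomputable def hutchinsonDiag (B : Matrix ι ι ℝ) (x : Fin m → ι → ℝ) (i : ι) : ℝ :=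
  (m : ℝ)⁻¹ * ∑ k, x k i * B.mulVec (x k) i

lemma mul_mulVec_apply_eq_add_offDiagTerm (B : Matrix ι ι ℝ) {r : ι → ℝ} {i : ι}
    (hr : r i = 1 ∨ r i = -1) : r i * B.mulVec r i = B i i + offDiagTerm (B i) i r := by
  have hsq : r i * r i = 1 := by rcases hr with h | h <;> simp [h]
  rw [Matrix.mulVec, dotProduct, ← add_sum_erase _ _ (mem_univ i), offDiagTerm, mul_add,
    mul_left_comm, hsq, mul_one]

lemma hutchinsonDiag_eq_add (B : Matrix ι ι ℝ) (hm : m ≠ 0) {x : Fin m → ι → ℝ} {i : ι}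
    (hx : ∀ k, x k i = 1 ∨ x k i = -1) :
    hutchinsonDiag B x i = B i i + (m : ℝ)⁻¹ * ∑ k, offDiagTerm (B i) i (x k) := by
  simp only [hutchinsonDiag, mul_mulVec_apply_eq_add_offDiagTerm B (hx _), sum_add_distrib,
    sum_const, card_univ, Fintype.card_fin, nsmul_eq_mul, mul_add]
  field_simp

lemma diag_eq_of_hutchinsonDiag_le (B : Matrix ι ι ℝ) (hm : m ≠ 0) {M Δ : ℝ}
    (hB : ∀ i, B i i ≤ M) (hgap : ∀ i, B i i < M → B i i ≤ M - Δ) {i₀ : ι}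
    (hi₀ : B i₀ i₀ = M) {x : Fin m → ι → ℝ} (hx : ∀ k i, x k i = 1 ∨ x k i = -1)
    (hsmall : ∀ i, |∑ k, offDiagTerm (B i) i (x k)| < m * Δ / 2) {j : ι}
    (hj : ∀ i, hutchinsonDiag B x i ≤ hutchinsonDiag B x j) : B j j = M := by
  refine eq_of_abs_sub_lt_half_gap (b := fun i => B i i) hB hgap hi₀ (fun i => ?_) (hj i₀)
  rw [hutchinsonDiag_eq_add B hm (hx · i), add_sub_cancel_left, abs_mul, abs_inv,
    Nat.abs_cast, inv_mul_lt_iff₀ (by positivity)]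
  linarith [hsmall i]

lemma diag_le_of_hutchinsonDiag_le [Nonempty ι] (B : Matrix ι ι ℝ) (hm : m ≠ 0) {M Δ : ℝ}
    (hM : M = ⨆ i, B i i) (hΔ : Δ = M - sSup {x : ℝ | ∃ j, B j j = x ∧ x < M})
    {x : Fin m → ι → ℝ} (hx : ∀ k i, x k i = 1 ∨ x k i = -1)
    (hsmall : ∀ i, |∑ k, offDiagTerm (B i) i (x k)| < m * Δ / 2) {j : ι}
    (hj : ∀ i, hutchinsonDiag B x i ≤ hutchinsonDiag B x j) (i : ι) : B i i ≤ B j j := by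
  have hBM : ∀ i, B i i ≤ M := fun i =>
    hM ▸ le_ciSup (f := fun i => B i i) (Set.finite_range _).bddAbove i
  obtain ⟨i₀, hi₀⟩ : ∃ i₀, B i₀ i₀ = M := hM ▸ exists_eq_ciSup_of_finite
  rw [diag_eq_of_hutchinsonDiag_le B hm hBM (fun _ => le_sub_of_lt_of_eq_sub_sSup hΔ) hi₀ hx
    hsmall hj]
  exact hBM i

end Hutchinson

/-- `v = m Δ² / (8 log (2d/δ))` is the variance proxy for which `d` two-sided sub-Gaussian tails
at level `m Δ / 2`, for sums of `m` terms, add up to exactly `δ`. -/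
lemma exists_ge_and_card_mul_tail_eq {d m : ℕ} {δ Δ V : ℝ} (hd : 0 < d) (hm : 0 < m)
    (hδ : 0 < δ) (hδ1 : δ ≤ 1) (hΔ : 0 < Δ) (hV : 8 * log (2 * d / δ) / Δ ^ 2 * V < m) :
    ∃ v : ℝ≥0, V ≤ v ∧ d * (2 * exp (-(m * Δ / 2) ^ 2 / (2 * (m * v)))) = δ := by
  have hL : 0 < log (2 * d / δ) := log_pos <| by
    rw [lt_div_iff₀ hδ]
    linarith [show (1 : ℝ) ≤ d from Nat.one_le_cast.2 hd]
  refine ⟨⟨m / (8 * log (2 * d / δ) / Δ ^ 2), by positivity⟩,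
    (le_div_iff₀' (by positivity)).2 hV.le, ?_⟩
  have hexponent : -(m * Δ / 2) ^ 2 / (2 * (m * (m / (8 * log (2 * d / δ) / Δ ^ 2))))
      = -log (2 * d / δ) := by
    field_simp
    norm_num
  change (d : ℝ) * (2 * exp (-(m * Δ / 2) ^ 2 / (2 * (m * (m / (8 * log (2 * d / δ) / Δ ^ 2))))))
    = δ
  rw [hexponent, exp_neg, exp_log (by positivity)]
  field_simp

theorem twinest_oracle_complexity {Ω : Type*} [MeasurableSpace Ω]
    (μ : Measure Ω) [IsProbabilityMeasure μ] (d n m : ℕ) (hd : 0 < d) (hm : 0 < m)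
    (A : Matrix (Fin d) (Fin n) ℝ)
    (X : Ω → Fin m → Fin d → ℝ)
    (hmeas : ∀ k i, Measurable fun ω => X ω k i)
    (hindep : iIndepFun (m := fun _ : Fin m × Fin d => (inferInstance : MeasurableSpace ℝ))
      (fun p ω => X ω p.1 p.2) μ)
    (hlaw : ∀ k i, μ.map (fun ω => X ω k i) = rademacherLaw)
    (δ M Δ : ℝ) (hδ : 0 < δ) (hδ1 : δ ≤ 1)
    (hM : haveI : NeZero d := ⟨hd.ne'⟩; M = ⨆ i : Fin d, (A * A.transpose) i i)
    (hΔ : Δ = M - sSup {x : ℝ | ∃ j : Fin d, (A * A.transpose) j j = x ∧ x < M})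
    (hΔpos : 0 < Δ)
    (jstar : Ω → Fin d)
    (hjstar : ∀ ω, ∀ i : Fin d,
      (m : ℝ)⁻¹ * (∑ k, X ω k i * ((A * A.transpose).mulVec (X ω k)) i)
        ≤ (m : ℝ)⁻¹ * (∑ k, X ω k (jstar ω) * ((A * A.transpose).mulVec (X ω k)) (jstar ω)))
    (hmlarge : haveI : NeZero d := ⟨hd.ne'⟩;
      8 * Real.log (2 * d / δ) / Δ ^ 2 *
          (⨆ i : Fin d, ∑ j ∈ Finset.univ \ {i}, ((A * A.transpose) i j) ^ 2)
        < (m : ℝ)) :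
    haveI : NeZero d := ⟨hd.ne'⟩
    ENNReal.ofReal (1 - δ)
      ≤ μ {ω | Real.sqrt (∑ j, (A (jstar ω) j) ^ 2)
            = ⨆ i : Fin d, Real.sqrt (∑ j, (A i j) ^ 2)} := by
  have : NeZero d := ⟨hd.ne'⟩
  set B := A * A.transpose
  obtain ⟨v, hVv, hδeq⟩ := exists_ge_and_card_mul_tail_eq hd hm hδ hδ1 hΔpos hmlarge
  have hv : ∀ i, ∑ j ∈ univ.erase i, B i j ^ 2 ≤ v := fun i => by
    refine le_trans ?_ hVv
    rw [← sdiff_singleton_eq_erase]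
    exact le_ciSup (f := fun i => ∑ j ∈ univ \ {i}, B i j ^ 2) (Set.finite_range _).bddAbove i
  have hgood := one_sub_le_measure_forall_abs_sum_offDiagTerm_lt hmeas hindep hlaw B hv
    (ε := m * Δ / 2) (by positivity)
  rw [Fintype.card_fin, Fintype.card_fin, hδeq] at hgood
  have hsign : ∀ᵐ ω ∂μ, ∀ k i, X ω k i = 1 ∨ X ω k i = -1 :=
    ae_all_iff.2 fun k => ae_all_iff.2 fun i =>
      ae_of_ae_map (hmeas k i).aemeasurable (hlaw k i ▸ ae_rademacherLaw)
  refine hgood.trans (measure_mono_ae <| hsign.mono fun ω hω hsmall => ?_)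
  have hmax := diag_le_of_hutchinsonDiag_le B hm.ne' hM hΔ hω hsmall (hjstar ω)
  have hrow : ∀ i, ∑ j, A i j ^ 2 = B i i := fun i => by simp [B, Matrix.mul_apply, sq]
  show √(∑ j, A (jstar ω) j ^ 2) = ⨆ i, √(∑ j, A i j ^ 2)
  simp only [hrow]
  exact le_antisymm (le_ciSup (f := fun i => √(B i i)) (Set.finite_range _).bddAbove (jstar ω))
    (ciSup_le fun i => sqrt_le_sqrt (hmax i))
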